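/- In any QBDi3-model whose top world exists (or more generally using the maximal-successor frame condition), the axiom schemata of QBDi3 are valid and modus ponens preserves validity; in particular ∼A→¬A and ¬¬(A∨∼A) are true at every world (soundness for the propositional fragment). -/
import Mathlib


inductive Fm : Type where
  | atom : Nat → Fm
  | bot : Fm
  | snot : Fm → Fm
  | and : Fm → Fm → Fm
  | or : Fm → Fm → Fm
  | imp : Fm → Fm → Fm
deriving DecidableEq

/-- Intuitionistic/Boolean negation `¬A := A → ⊥`. -/
def negFm (A : Fm) : Fm := Fm.imp A Fm.bot

/-- Biconditional `A ↔ B := (A→B) ∧ (B→A)`. -/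
def iffFm (A B : Fm) : Fm := Fm.and (Fm.imp A B) (Fm.imp B A)

structure KModel where
  W : Type
  le : W → W → Prop
  refl : ∀ w, le w w
  trans : ∀ {u v w}, le u v → le v w → le u w
  antisymm : ∀ {u v}, le u v → le v u → u = v
  Vp : W → Nat → Prop
  Vm : W → Nat → Prop
  monoP : ∀ {w x n}, le w x → Vp w n → Vp x n
  monoM : ∀ {w x n}, le w x → Vm w n → Vm x n

/-- BDi3 forcing: `(force M A w).1` is "1 ∈ I(w,A)", `(force M A w).2` is "0 ∈ I(w,A)". -/
def force (M : KModel) : Fm → M.W → Prop × Prop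
  | .atom n, w => (M.Vp w n, M.Vm w n)
  | .bot, _ => (False, True)
  | .snot A, w => ((force M A w).2, (force M A w).1)
  | .and A B, w => ((force M A w).1 ∧ (force M B w).1, (force M A w).2 ∨ (force M B w).2)
  | .or A B, w => ((force M A w).1 ∨ (force M B w).1, (force M A w).2 ∧ (force M B w).2)
  | .imp A B, w =>
      ((∀ x, M.le w x → (force M A x).1 → (force M B x).1),
       (∀ x, M.le w x → ¬ (force M A x).2) ∧ (force M B w).2)

structure BDi3Model extends KModel where
  disjoint : ∀ w n, ¬ (Vp w n ∧ Vm w n)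
  maxsucc : ∀ w, ∃ x, le w x ∧ ∀ y, le x y → y = x
  po : ∀ w x n, le w x → ∃ y, le x y ∧ (Vp y n ∨ Vm y n)

/-- Hilbert-style derivability: intuitionistic positive axioms Ax1, Ax2, Ax4–Ax10,
modus ponens, plus extra axioms from `Ax`. -/
inductive Deriv (Ax : Fm → Prop) : Fm → Prop where
  | extra {A} : Ax A → Deriv Ax A
  | ax1 (A B) : Deriv Ax (Fm.imp A (Fm.imp B A))
  | ax2 (A B C) : Deriv Ax (Fm.imp (Fm.imp A (Fm.imp B C)) (Fm.imp (Fm.imp A B) (Fm.imp A C)))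
  | ax4 (A B) : Deriv Ax (Fm.imp (Fm.and A B) A)
  | ax5 (A B) : Deriv Ax (Fm.imp (Fm.and A B) B)
  | ax6 (A B C) : Deriv Ax (Fm.imp (Fm.imp C A) (Fm.imp (Fm.imp C B) (Fm.imp C (Fm.and A B))))
  | ax7 (A B) : Deriv Ax (Fm.imp A (Fm.or A B))
  | ax8 (A B) : Deriv Ax (Fm.imp B (Fm.or A B))
  | ax9 (A B C) : Deriv Ax (Fm.imp (Fm.imp A C) (Fm.imp (Fm.imp B C) (Fm.imp (Fm.or A B) C)))
  | ax10 (A) : Deriv Ax (Fm.imp Fm.bot A)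
  | mp {A B} : Deriv Ax (Fm.imp A B) → Deriv Ax A → Deriv Ax B

/-- The characteristic axioms of (propositional) BDi3. -/
inductive BDi3Ax : Fm → Prop where
  | toSnotBot (A) : BDi3Ax (Fm.imp A (Fm.snot Fm.bot))
  | dne (A) : BDi3Ax (iffFm (Fm.snot (Fm.snot A)) A)
  | dmAnd (A B) : BDi3Ax (iffFm (Fm.snot (Fm.and A B)) (Fm.or (Fm.snot A) (Fm.snot B)))
  | dmOr (A B) : BDi3Ax (iffFm (Fm.snot (Fm.or A B)) (Fm.and (Fm.snot A) (Fm.snot B)))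
  | dmImp (A B) : BDi3Ax (iffFm (Fm.snot (Fm.imp A B)) (Fm.and (negFm (Fm.snot A)) (Fm.snot B)))
  | i2 (A) : BDi3Ax (Fm.imp (Fm.snot A) (negFm A))
  | i3 (A) : BDi3Ax (negFm (negFm (Fm.or A (Fm.snot A))))


section Sound

variable (M : BDi3Model)

lemma persist : ∀ (A : Fm) {w x : M.W}, M.le w x →
    ((force M.toKModel A w).1 → (force M.toKModel A x).1) ∧
    ((force M.toKModel A w).2 → (force M.toKModel A x).2) := by
  intro A
  induction A with
  | atom n => intro w x h; exact ⟨M.monoP h, M.monoM h⟩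
  | bot => intro w x h; exact ⟨id, id⟩
  | snot A ih => intro w x h; exact ⟨(ih h).2, (ih h).1⟩
  | and A B ihA ihB =>
      intro w x h
      constructor
      · rintro ⟨a, b⟩; exact ⟨(ihA h).1 a, (ihB h).1 b⟩
      · rintro (a | b); exacts [Or.inl ((ihA h).2 a), Or.inr ((ihB h).2 b)]
  | or A B ihA ihB =>
      intro w x h
      constructor
      · rintro (a | b); exacts [Or.inl ((ihA h).1 a), Or.inr ((ihB h).1 b)]
      · rintro ⟨a, b⟩; exact ⟨(ihA h).2 a, (ihB h).2 b⟩
  | imp A B ihA ihB =>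
      intro w x h
      constructor
      · intro H y hy; exact H y (M.trans h hy)
      · rintro ⟨H, b⟩
        exact ⟨fun y hy => H y (M.trans h hy), (ihB h).2 b⟩

lemma disj_det : ∀ (A : Fm),
    (∀ w : M.W, ¬ ((force M.toKModel A w).1 ∧ (force M.toKModel A w).2)) ∧
    (∀ m : M.W, (∀ y, M.le m y → y = m) →
      ((force M.toKModel A m).1 ∨ (force M.toKModel A m).2)) := by
  intro A
  induction A with
  | atom n =>
      refine ⟨fun w => M.disjoint w n, fun m hm => ?_⟩
      obtain ⟨y, hy, h⟩ := M.po m m n (M.refl m)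
      rwa [hm y hy] at h
  | bot => exact ⟨fun w h => h.1, fun m _ => Or.inr trivial⟩
  | snot A ih =>
      exact ⟨fun w h => (ih.1 w) ⟨h.2, h.1⟩, fun m hm => (ih.2 m hm).symm⟩
  | and A B ihA ihB =>
      constructor
      · rintro w ⟨⟨a1, b1⟩, (a2 | b2)⟩
        · exact ihA.1 w ⟨a1, a2⟩
        · exact ihB.1 w ⟨b1, b2⟩
      · intro m hm
        rcases ihA.2 m hm with a1 | a2
        · rcases ihB.2 m hm with b1 | b2
          · exact Or.inl ⟨a1, b1⟩
          · exact Or.inr (Or.inr b2)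
        · exact Or.inr (Or.inl a2)
  | or A B ihA ihB =>
      constructor
      · rintro w ⟨(a1 | b1), ⟨a2, b2⟩⟩
        · exact ihA.1 w ⟨a1, a2⟩
        · exact ihB.1 w ⟨b1, b2⟩
      · intro m hm
        rcases ihA.2 m hm with a1 | a2
        · exact Or.inl (Or.inl a1)
        · rcases ihB.2 m hm with b1 | b2
          · exact Or.inl (Or.inr b1)
          · exact Or.inr ⟨a2, b2⟩
  | imp A B ihA ihB =>
      constructor
      · rintro w ⟨h1, ⟨hA2, hB2⟩⟩
        obtain ⟨m, hwm, hm⟩ := M.maxsucc w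
        rcases ihA.2 m hm with a1 | a2
        · exact ihB.1 m ⟨h1 m hwm a1, (persist M B hwm).2 hB2⟩
        · exact hA2 m hwm a2
      · intro m hm
        rcases ihB.2 m hm with b1 | b2
        · exact Or.inl (fun x hx _ => (hm x hx) ▸ b1)
        · by_cases a1 : (force M.toKModel A m).1
          · refine Or.inr ⟨fun x hx a2 => ?_, b2⟩
            exact ihA.1 m ⟨a1, (hm x hx) ▸ a2⟩
          · exact Or.inl (fun x hx h => absurd ((hm x hx) ▸ h) a1)

lemma valid_i2 (A : Fm) (w : M.W) :
    (force M.toKModel (Fm.imp (Fm.snot A) (negFm A)) w).1 := by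
  intro x _ hA2 y hy hA1
  exact (disj_det M A).1 y ⟨hA1, (persist M A hy).2 hA2⟩

lemma valid_i3 (A : Fm) (w : M.W) :
    (force M.toKModel (negFm (negFm (Fm.or A (Fm.snot A)))) w).1 := by
  intro x _ H
  obtain ⟨m, hxm, hm⟩ := M.maxsucc x
  exact H m hxm ((disj_det M A).2 m hm)

lemma valid_deriv (A : Fm) (h : Deriv BDi3Ax A) (w : M.W) :
    (force M.toKModel A w).1 := by
  induction h generalizing w with
  | extra hax =>
      cases hax with
      | toSnotBot A => intro x _ _; exact trivial
      | dne A => exact ⟨fun x _ h => h, fun x _ h => h⟩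
      | dmAnd A B => exact ⟨fun x _ h => h, fun x _ h => h⟩
      | dmOr A B => exact ⟨fun x _ h => h, fun x _ h => h⟩
      | dmImp A B =>
          constructor
          · rintro x _ ⟨h1, h2⟩; exact ⟨fun y hy a2 => h1 y hy a2, h2⟩
          · rintro x _ ⟨h1, h2⟩; exact ⟨fun y hy a2 => h1 y hy a2, h2⟩
      | i2 A => exact valid_i2 M A w
      | i3 A => exact valid_i3 M A w
  | ax1 A B => intro x _ a y hy _; exact (persist M A hy).1 a
  | ax2 A B C =>
      intro x _ h1 y hy h2 z hz a
      exact h1 z (M.trans hy hz) a z (M.refl z) (h2 z hz a)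
  | ax4 A B => intro x _ h; exact h.1
  | ax5 A B => intro x _ h; exact h.2
  | ax6 A B C =>
      intro x _ h1 y hy h2 z hz c
      exact ⟨h1 z (M.trans hy hz) c, h2 z hz c⟩
  | ax7 A B => intro x _ a; exact Or.inl a
  | ax8 A B => intro x _ b; exact Or.inr b
  | ax9 A B C =>
      intro x _ h1 y hy h2 z hz ab
      rcases ab with a | b
      · exact h1 z (M.trans hy hz) a
      · exact h2 z hz b
  | ax10 A => intro x _ h; exact h.elim
  | mp hAB hA ihAB ihA => exact ihAB w w (M.refl w) (ihA w)

end Sound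

/-- Soundness of propositional BDi3: every theorem (so in particular every
axiom, with modus ponens preserving validity) is true at every world of every
BDi3-model; in particular `∼A → ¬A` and `¬¬(A ∨ ∼A)` are true at every world. -/
theorem bdi3_soundness :
    (∀ (M : BDi3Model) (A : Fm), Deriv BDi3Ax A →
      ∀ w : M.W, (force M.toKModel A w).1) ∧
    (∀ (M : BDi3Model) (A : Fm) (w : M.W),
      (force M.toKModel (Fm.imp (Fm.snot A) (negFm A)) w).1 ∧
      (force M.toKModel (negFm (negFm (Fm.or A (Fm.snot A)))) w).1) := by
  exact ⟨fun M A h w => valid_deriv M A h w,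
    fun M A w => ⟨valid_i2 M A w, valid_i3 M A w⟩⟩
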